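/- arXiv:2407.03186 — 2 statements merged into one kernel-verified Lean document; each statement's English description precedes it below -/
import Mathlib

section
/- Let Θ ⊆ ℤ^I and let S = {s_g : g∈Θ} be a Θ-pointed family such that every s_g has nonnegative coefficients. Assume that for all g₁, g₂ ∈ Θ there is a finite decomposition s_{g₁}·s_{g₂} = Σ_{g∈Θ} b^g·s_g with nonnegative integer coefficients b^g. Then for every g with b^g ≠ 0: (i) supp s_g ⊆ supp s_{g₁} ∪ supp s_{g₂}; (ii) writing g = g₁ + g₂ + p*(n₀) with n₀ ∈ ℕ^{I_uf} (such n₀ exists and is unique), one has n₀ + suppDim s_g ≤ suppDim s_{g₁} + suppDim s_{g₂} coordinatewise; in particular suppDim s_g ≤ suppDim s_{g₁} + suppDim s_{g₂}, with strict inequality in some coordinate whenever g ≠ g₁ + g₂. -/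
/-! Common setup. -/

noncomputable section

namespace CAFreeze

variable {I : Type*} [Fintype I] [DecidableEq I]

/-- The Laurent polynomial ring LP = ℤ[x_i^{±1} : i ∈ I], modeled as the group algebra of
ℤ^I over ℤ. -/
abbrev LP (I : Type*) := AddMonoidAlgebra ℤ (I → ℤ)

/-- The monomial x^m for an exponent vector m ∈ ℤ^I. -/
def mono (m : I → ℤ) : LP I := AddMonoidAlgebra.ofCoeff (Finsupp.single m 1)

/-- The coefficient of the monomial x^m in z ∈ LP. -/
def coeff (z : LP I) (m : I → ℤ) : ℤ := (AddMonoidAlgebra.coeff z : (I → ℤ) →₀ ℤ) m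

variable (Iuf : Finset I) (Bt : I → {i // i ∈ Iuf} → ℤ)

/-- The linear map p* : ℤ^{I_uf} → ℤ^I, p*(n) = B̃·n. -/
def pstar (n : {i // i ∈ Iuf} → ℤ) : I → ℤ := fun i => ∑ kk : {i // i ∈ Iuf}, Bt i kk * n kk

/-- p*(n) for n ∈ ℕ^{I_uf}. -/
def pstarN (n : {i // i ∈ Iuf} → ℕ) : I → ℤ := pstar Iuf Bt fun kk => (n kk : ℤ)

/-- supp n = {k ∈ I_uf : n_k ≠ 0}, as a subset of I. -/
def suppn (n : {i // i ∈ Iuf} → ℕ) : Set I := {i | ∃ h : i ∈ Iuf, n ⟨i, h⟩ ≠ 0}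

/-- LP_{⪯m}: the ℤ-submodule of LP spanned by the monomials x^{m+p*(n)}, n ∈ ℕ^{I_uf}. -/
def LPle (m : I → ℤ) : Submodule ℤ (LP I) :=
  Submodule.span ℤ {z : LP I | ∃ n : {i // i ∈ Iuf} → ℕ, z = mono (m + pstarN Iuf Bt n)}

open Classical in
/-- The freezing operator frz_{F,m}: it keeps the monomials x^{m+p*(n)} with
supp n ∩ F = ∅ and kills the monomials x^{m+p*(n)} with supp n ∩ F ≠ ∅. -/
def frz (F : Finset I) (m : I → ℤ) (z : LP I) : LP I :=
  AddMonoidAlgebra.ofCoeff (Finsupp.filter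
    (fun e => ∃ n : {i // i ∈ Iuf} → ℕ, e = m + pstarN Iuf Bt n ∧ suppn Iuf n ∩ (F : Set I) = ∅)
      (AddMonoidAlgebra.coeff z))

/-- z ∈ LP is pointed at g: z = Σ_{n ∈ ℕ^{I_uf}} c_n x^{g+p*(n)} with c_0 = 1. -/
def Pointed (g : I → ℤ) (z : LP I) : Prop :=
  coeff z g = 1 ∧
    ∀ e ∈ (AddMonoidAlgebra.coeff z : (I → ℤ) →₀ ℤ).support, ∃ n : {i // i ∈ Iuf} → ℕ, e = g + pstarN Iuf Bt n

/-- supp z = ∪_{c_n ≠ 0} supp n, for a g-pointed z = Σ_n c_n x^{g+p*(n)}. -/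
def suppz (g : I → ℤ) (z : LP I) : Set I :=
  ⋃ n ∈ {n : {i // i ∈ Iuf} → ℕ | coeff z (g + pstarN Iuf Bt n) ≠ 0}, suppn Iuf n

/-- suppDim z ∈ ℕ^{I_uf}: the coordinatewise maximum of {n : c_n ≠ 0}, for a g-pointed
z = Σ_n c_n x^{g+p*(n)}. -/
def suppDim (g : I → ℤ) (z : LP I) : {i // i ∈ Iuf} → ℕ :=
  fun kk => sSup {d : ℕ | ∃ n : {i // i ∈ Iuf} → ℕ, coeff z (g + pstarN Iuf Bt n) ≠ 0 ∧ n kk = d}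

/-!
STATEMENT 11: Let Θ ⊆ ℤ^I and let S = {s_g : g∈Θ} be a Θ-pointed family such that every s_g
has nonnegative coefficients. Assume that for all g₁, g₂ ∈ Θ there is a finite decomposition
s_{g₁}·s_{g₂} = Σ_{g∈Θ} b^g·s_g with nonnegative integer coefficients b^g. Then for every g
with b^g ≠ 0: (i) supp s_g ⊆ supp s_{g₁} ∪ supp s_{g₂}; (ii) writing g = g₁ + g₂ + p*(n₀)
with n₀ ∈ ℕ^{I_uf} (such n₀ exists and is unique), one has
n₀ + suppDim s_g ≤ suppDim s_{g₁} + suppDim s_{g₂} coordinatewise; in particular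
suppDim s_g ≤ suppDim s_{g₁} + suppDim s_{g₂}, with strict inequality in some coordinate
whenever g ≠ g₁ + g₂.
-/

/-! Since all coefficients are nonnegative, nothing cancels in `Σ b^g s_g`, so every monomial
`x^{g+p*(n)}` of an `s_g` with `b^g ≠ 0` is a monomial of `s_{g₁} s_{g₂}`, i.e. a product
`x^{g₁+p*(n₁)} x^{g₂+p*(n₂)}` of monomials of the factors. Writing `g = g₁ + g₂ + p*(n₀)`
(the case `n = 0` gives such an `n₀`), injectivity of `p*` turns this into `n₀ + n = n₁ + n₂`
in `ℕ^{I_uf}`, and both the support inclusion and the bound on `suppDim` are read off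
coordinatewise. -/

section

omit [Fintype I] [DecidableEq I]

/-- The `n` with `c_n ≠ 0` when `z` is written as `Σ_n c_n x^{g+p*(n)}`. -/
def exponents (g : I → ℤ) (z : LP I) : Set ({i // i ∈ Iuf} → ℕ) :=
  {n | coeff z (g + pstarN Iuf Bt n) ≠ 0}

variable {Iuf Bt}

lemma pstarN_add (n m : {i // i ∈ Iuf} → ℕ) :
    pstarN Iuf Bt (n + m) = pstarN Iuf Bt n + pstarN Iuf Bt m := by
  funext i
  simp only [pstarN, pstar, Pi.add_apply, Nat.cast_add, mul_add, Finset.sum_add_distrib]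

lemma pstarN_zero : pstarN Iuf Bt 0 = 0 := by
  funext i
  simp [pstarN, pstar]

lemma pstarN_injective (hfull : Function.Injective (pstar Iuf Bt)) :
    Function.Injective (pstarN Iuf Bt) := fun n m h =>
  funext fun k => by exact_mod_cast congrFun (hfull h) k

lemma zero_mem_exponents {g : I → ℤ} {z : LP I} (hz : Pointed Iuf Bt g z) :
    0 ∈ exponents Iuf Bt g z := by
  simp [exponents, pstarN_zero, hz.1]

lemma exponents_finite (hfull : Function.Injective (pstar Iuf Bt)) (g : I → ℤ) (z : LP I) :
    (exponents Iuf Bt g z).Finite :=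
  ((z.coeff.support.finite_toSet).preimage
    ((add_right_injective g).comp (pstarN_injective hfull)).injOn).subset
    fun _ hn => Finsupp.mem_support_iff.mpr hn

lemma suppDim_eq_sSup (g : I → ℤ) (z : LP I) (k : {i // i ∈ Iuf}) :
    suppDim Iuf Bt g z k = sSup ((· k) '' exponents Iuf Bt g z) :=
  rfl

lemma le_suppDim (hfull : Function.Injective (pstar Iuf Bt)) {g : I → ℤ} {z : LP I}
    {n : {i // i ∈ Iuf} → ℕ} (hn : n ∈ exponents Iuf Bt g z) (k : {i // i ∈ Iuf}) :
    n k ≤ suppDim Iuf Bt g z k := by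
  rw [suppDim_eq_sSup]
  exact le_csSup ((exponents_finite hfull g z).image _).bddAbove ⟨n, hn, rfl⟩

lemma exists_mem_exponents_apply_eq_suppDim (hfull : Function.Injective (pstar Iuf Bt))
    {g : I → ℤ} {z : LP I} (hz : Pointed Iuf Bt g z) (k : {i // i ∈ Iuf}) :
    ∃ n ∈ exponents Iuf Bt g z, n k = suppDim Iuf Bt g z k := by
  rw [suppDim_eq_sSup]
  exact Nat.sSup_mem ⟨_, Set.mem_image_of_mem _ (zero_mem_exponents hz)⟩
    ((exponents_finite hfull g z).image _).bddAbove

lemma coeff_sum_smul_ne_zero_of_nonneg {ι : Type*} (b : ι →₀ ℤ) (s : ι → LP I)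
    (hb : ∀ i, 0 ≤ b i) (hs : ∀ i ∈ b.support, ∀ m, 0 ≤ coeff (s i) m) {i : ι} (hi : b i ≠ 0)
    {m : I → ℤ} (hm : coeff (s i) m ≠ 0) :
    coeff (b.sum fun i a => a • s i) m ≠ 0 := by
  have hcoeff : coeff (b.sum fun i a => a • s i) m = ∑ j ∈ b.support, b j * coeff (s j) m := by
    simp only [Finsupp.sum, coeff, AddMonoidAlgebra.coeff_sum, Finsupp.finsetSum_apply,
      AddMonoidAlgebra.coeff_smul, Finsupp.smul_apply, smul_eq_mul]
  have hib : i ∈ b.support := Finsupp.mem_support_iff.mpr hi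
  have hterm : 0 < b i * coeff (s i) m :=
    mul_pos ((hb i).lt_of_ne' hi) ((hs i hib m).lt_of_ne' hm)
  rw [hcoeff]
  exact (hterm.trans_le (Finset.single_le_sum
    (fun j hj => mul_nonneg (hb j) (hs j hj m)) hib)).ne'

lemma exists_exponents_of_coeff_mul_ne_zero {g₁ g₂ e : I → ℤ} {z₁ z₂ : LP I}
    (h₁ : Pointed Iuf Bt g₁ z₁) (h₂ : Pointed Iuf Bt g₂ z₂) (he : coeff (z₁ * z₂) e ≠ 0) :
    ∃ n₁ ∈ exponents Iuf Bt g₁ z₁, ∃ n₂ ∈ exponents Iuf Bt g₂ z₂,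
      e = g₁ + g₂ + pstarN Iuf Bt (n₁ + n₂) := by
  classical
  obtain ⟨e₁, he₁, e₂, he₂, rfl⟩ := Finset.mem_add.mp
    (AddMonoidAlgebra.support_coeff_mul_subset z₁ z₂ (Finsupp.mem_support_iff.mpr he))
  obtain ⟨n₁, rfl⟩ := h₁.2 e₁ he₁
  obtain ⟨n₂, rfl⟩ := h₂.2 e₂ he₂
  refine ⟨n₁, Finsupp.mem_support_iff.mp he₁, n₂, Finsupp.mem_support_iff.mp he₂, ?_⟩
  rw [pstarN_add]
  abel

lemma exists_add_eq_of_coeff_mul_ne_zero (hfull : Function.Injective (pstar Iuf Bt))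
    {g g₁ g₂ : I → ℤ} {z₁ z₂ : LP I} {n₀ n : {i // i ∈ Iuf} → ℕ}
    (h₁ : Pointed Iuf Bt g₁ z₁) (h₂ : Pointed Iuf Bt g₂ z₂) (hg : g = g₁ + g₂ + pstarN Iuf Bt n₀)
    (hn : coeff (z₁ * z₂) (g + pstarN Iuf Bt n) ≠ 0) :
    ∃ n₁ ∈ exponents Iuf Bt g₁ z₁, ∃ n₂ ∈ exponents Iuf Bt g₂ z₂, n₀ + n = n₁ + n₂ := by
  obtain ⟨n₁, hn₁, n₂, hn₂, he⟩ := exists_exponents_of_coeff_mul_ne_zero h₁ h₂ hn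
  refine ⟨n₁, hn₁, n₂, hn₂, pstarN_injective hfull (add_left_cancel (a := g₁ + g₂) ?_)⟩
  rw [← he, hg, pstarN_add]
  abel

section Split

variable {g g₁ g₂ : I → ℤ} {z z₁ z₂ : LP I} {n₀ : {i // i ∈ Iuf} → ℕ}
  (hsplit : ∀ n ∈ exponents Iuf Bt g z,
    ∃ n₁ ∈ exponents Iuf Bt g₁ z₁, ∃ n₂ ∈ exponents Iuf Bt g₂ z₂, n₀ + n = n₁ + n₂)
include hsplit

lemma suppz_subset_union_of_split :
    suppz Iuf Bt g z ⊆ suppz Iuf Bt g₁ z₁ ∪ suppz Iuf Bt g₂ z₂ := by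
  intro i hi
  obtain ⟨n, hn, hiI, hni⟩ := Set.mem_iUnion₂.mp hi
  obtain ⟨n₁, hn₁, n₂, hn₂, hsum⟩ := hsplit n hn
  have hik : n₀ ⟨i, hiI⟩ + n ⟨i, hiI⟩ = n₁ ⟨i, hiI⟩ + n₂ ⟨i, hiI⟩ := congrFun hsum _
  by_cases h₁ : n₁ ⟨i, hiI⟩ = 0
  · exact Or.inr (Set.mem_biUnion hn₂ ⟨hiI, by omega⟩)
  · exact Or.inl (Set.mem_biUnion hn₁ ⟨hiI, h₁⟩)

lemma add_suppDim_le_of_split (hfull : Function.Injective (pstar Iuf Bt))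
    (hz : Pointed Iuf Bt g z) (k : {i // i ∈ Iuf}) :
    n₀ k + suppDim Iuf Bt g z k ≤ suppDim Iuf Bt g₁ z₁ k + suppDim Iuf Bt g₂ z₂ k := by
  obtain ⟨n, hn, hnk⟩ := exists_mem_exponents_apply_eq_suppDim hfull hz k
  obtain ⟨n₁, hn₁, n₂, hn₂, hsum⟩ := hsplit n hn
  calc n₀ k + suppDim Iuf Bt g z k = n₁ k + n₂ k := by rw [← hnk]; exact congrFun hsum k
    _ ≤ _ := add_le_add (le_suppDim hfull hn₁ k) (le_suppDim hfull hn₂ k)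

end Split

end

theorem positive_family_local_support (hfull : Function.Injective (pstar Iuf Bt))
    (Θ : Set (I → ℤ)) (s : (I → ℤ) → LP I)
    (hs : ∀ g ∈ Θ, Pointed Iuf Bt g (s g))
    -- every s_g has nonnegative coefficients
    (hpos : ∀ g ∈ Θ, ∀ m : I → ℤ, 0 ≤ coeff (s g) m)
    -- a finite decomposition of s_{g₁}·s_{g₂} with nonnegative coefficients b
    (g₁ g₂ : I → ℤ) (hg₁ : g₁ ∈ Θ) (hg₂ : g₂ ∈ Θ)
    (b : (I → ℤ) →₀ ℤ) (hbΘ : (b.support : Set (I → ℤ)) ⊆ Θ) (hbpos : ∀ g, 0 ≤ b g)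
    (hdec : s g₁ * s g₂ = b.sum fun g a => a • s g) :
    ∀ g, b g ≠ 0 →
      -- (i) local support
      (suppz Iuf Bt g (s g) ⊆ suppz Iuf Bt g₁ (s g₁) ∪ suppz Iuf Bt g₂ (s g₂)) ∧
      -- (ii) there is a unique n₀ with g = g₁ + g₂ + p*(n₀) ...
      (∃! n₀ : {i // i ∈ Iuf} → ℕ, g = g₁ + g₂ + pstarN Iuf Bt n₀) ∧
      -- ... and n₀ + suppDim s_g ≤ suppDim s_{g₁} + suppDim s_{g₂} coordinatewise
      (∀ n₀ : {i // i ∈ Iuf} → ℕ, g = g₁ + g₂ + pstarN Iuf Bt n₀ →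
        ∀ kk : {i // i ∈ Iuf}, n₀ kk + suppDim Iuf Bt g (s g) kk ≤
          suppDim Iuf Bt g₁ (s g₁) kk + suppDim Iuf Bt g₂ (s g₂) kk) ∧
      -- in particular suppDim s_g ≤ suppDim s_{g₁} + suppDim s_{g₂}, ...
      (∀ kk : {i // i ∈ Iuf}, suppDim Iuf Bt g (s g) kk ≤
        suppDim Iuf Bt g₁ (s g₁) kk + suppDim Iuf Bt g₂ (s g₂) kk) ∧
      -- ... strictly in some coordinate whenever g ≠ g₁ + g₂
      (g ≠ g₁ + g₂ → ∃ kk : {i // i ∈ Iuf}, suppDim Iuf Bt g (s g) kk <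
        suppDim Iuf Bt g₁ (s g₁) kk + suppDim Iuf Bt g₂ (s g₂) kk) := by

  intro g hbg
  have hg : g ∈ Θ := hbΘ (Finsupp.mem_support_iff.mpr hbg)
  have hprod : ∀ n ∈ exponents Iuf Bt g (s g), coeff (s g₁ * s g₂) (g + pstarN Iuf Bt n) ≠ 0 :=
    fun n hn => hdec ▸ coeff_sum_smul_ne_zero_of_nonneg b s hbpos
      (fun g' hg' => hpos g' (hbΘ hg')) hbg hn
  obtain ⟨n₀, hn₀⟩ : ∃ n₀, g = g₁ + g₂ + pstarN Iuf Bt n₀ := by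
    have h0 := hprod 0 (zero_mem_exponents (hs g hg))
    rw [pstarN_zero, add_zero] at h0
    obtain ⟨n₁, -, n₂, -, h⟩ := exists_exponents_of_coeff_mul_ne_zero (hs g₁ hg₁) (hs g₂ hg₂) h0
    exact ⟨n₁ + n₂, h⟩
  have hsplit (n₀' : {i // i ∈ Iuf} → ℕ) (h : g = g₁ + g₂ + pstarN Iuf Bt n₀') :=
    fun n hn => exists_add_eq_of_coeff_mul_ne_zero hfull (hs g₁ hg₁) (hs g₂ hg₂) h (hprod n hn)
  have hbound (n₀' : {i // i ∈ Iuf} → ℕ) (h : g = g₁ + g₂ + pstarN Iuf Bt n₀') :=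
    add_suppDim_le_of_split (hsplit n₀' h) hfull (hs g hg)
  refine ⟨suppz_subset_union_of_split (hsplit n₀ hn₀),
    ⟨n₀, hn₀, fun m hm => pstarN_injective hfull (add_left_cancel (hm.symm.trans hn₀))⟩,
    hbound, fun k => (Nat.le_add_left _ _).trans (hbound n₀ hn₀ k), fun hne => ?_⟩
  obtain ⟨k, hk⟩ : ∃ k, n₀ k ≠ 0 := by
    by_contra! h
    exact hne (by rw [hn₀, show n₀ = 0 from funext h, pstarN_zero, add_zero])
  exact ⟨k, by have := hbound n₀ hn₀ k; omega⟩

end CAFreeze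
end
end

section
/- Let Θ ⊆ ℤ^I and let S = {s_g : g∈Θ} and Z = {z_g : g∈Θ} be Θ-pointed families. Assume: (i) for every g ∈ Θ there are finite decompositions s_g = Σ_{g'∈Θ} b_{g,g'}·z_{g'} and z_g = Σ_{g'∈Θ} c_{g,g'}·s_{g'} with integer coefficients, almost all zero; (ii) these transitions are local: supp z_{g'} ⊆ supp s_g whenever b_{g,g'} ≠ 0, and supp s_{g'} ⊆ supp z_g whenever c_{g,g'} ≠ 0; (iii) Z has local support under multiplication: for all g₁, g₂ ∈ Θ there is a finite decomposition z_{g₁}·z_{g₂} = Σ_{g∈Θ} α^g·z_g with integer coefficients such that supp z_g ⊆ supp z_{g₁} ∪ supp z_{g₂} whenever α^g ≠ 0. Then S has local support under multiplication: for all g₁, g₂ ∈ Θ there is a (necessarily unique) finite decomposition s_{g₁}·s_{g₂} = Σ_{g∈Θ} β^g·s_g with integer coefficients such that supp s_g ⊆ supp s_{g₁} ∪ supp s_{g₂} whenever β^g ≠ 0. -/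
/-!
For a family `f` indexed by `Θ` with supports `σ`, let `V_f(U)` be the span of those `f g` whose
support lies in `U`. A local transition `S → Z` says exactly that every `s_g` lies in
`V_z(supp s_g)`, hence `V_s(U) ≤ V_z(U)` for all `U`; with the reverse transition the two
filtrations coincide. Local support of `Z` under multiplication gives `V_z(U) * V_z(V) ≤ V_z(U ∪ V)`,
so `s_{g₁} s_{g₂} ∈ V_z(supp s_{g₁}) * V_z(supp s_{g₂}) ≤ V_z(U ∪ V) = V_s(U ∪ V)` with
`U = supp s_{g₁}`, `V = supp s_{g₂}`, which is the claim.
-/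

noncomputable section

namespace CAFreeze

variable {I : Type*} [Fintype I] [DecidableEq I]

variable (Iuf : Finset I) (Bt : I → {i // i ∈ Iuf} → ℤ)

section LocalSpan

variable {A ι κ : Type*}

def localSpan (R : Type*) [Semiring R] [AddCommMonoid A] [Module R A] (Θ : Set ι) (f : ι → A)
    (σ : ι → Set κ) (U : Set κ) : Submodule R A :=
  Submodule.span R (f '' {i | i ∈ Θ ∧ σ i ⊆ U})

section Module

variable {R : Type*} [Semiring R] [AddCommMonoid A] [Module R A] {Θ : Set ι} {f f' : ι → A}
  {σ σ' : ι → Set κ} {U V : Set κ} {x : A}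

theorem mem_localSpan_iff :
    x ∈ localSpan R Θ f σ U ↔ ∃ β : ι →₀ R, (β.support : Set ι) ⊆ Θ ∧
      x = (β.sum fun i a => a • f i) ∧ ∀ i, β i ≠ 0 → σ i ⊆ U := by
  rw [localSpan, Finsupp.mem_span_image_iff_linearCombination]
  refine exists_congr fun β => ?_
  rw [Finsupp.mem_supported, Finsupp.linearCombination_apply, eq_comm]
  constructor
  · rintro ⟨hβ, rfl⟩
    exact ⟨fun i hi => (hβ hi).1, rfl, fun i hi => (hβ (Finsupp.mem_support_iff.2 hi)).2⟩
  · rintro ⟨hΘ, rfl, hσ⟩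
    exact ⟨fun i hi => ⟨hΘ hi, hσ i (Finsupp.mem_support_iff.1 hi)⟩, rfl⟩

theorem localSpan_mono (h : U ⊆ V) : localSpan R Θ f σ U ≤ localSpan R Θ f σ V :=
  Submodule.span_mono <| Set.image_mono fun _ ⟨hi, hσ⟩ => ⟨hi, hσ.trans h⟩

theorem localSpan_le_localSpan (h : ∀ i ∈ Θ, f i ∈ localSpan R Θ f' σ' (σ i)) :
    localSpan R Θ f σ U ≤ localSpan R Θ f' σ' U :=
  Submodule.span_le.2 <| by
    rintro _ ⟨i, ⟨hi, hσ⟩, rfl⟩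
    exact localSpan_mono hσ (h i hi)

end Module

theorem localSpan_mul_le {R : Type*} [CommSemiring R] [Semiring A] [Algebra R A] {Θ : Set ι}
    {f : ι → A} {σ : ι → Set κ} {U V : Set κ}
    (h : ∀ i ∈ Θ, ∀ j ∈ Θ, f i * f j ∈ localSpan R Θ f σ (σ i ∪ σ j)) :
    localSpan R Θ f σ U * localSpan R Θ f σ V ≤ localSpan R Θ f σ (U ∪ V) := by
  rw [localSpan, localSpan, Submodule.span_mul_span, Submodule.span_le]
  rintro _ ⟨_, ⟨i, ⟨hi, hσi⟩, rfl⟩, _, ⟨j, ⟨hj, hσj⟩, rfl⟩, rfl⟩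
  exact localSpan_mono (Set.union_subset_union hσi hσj) (h i hi j hj)

end LocalSpan

theorem local_transition_local_support
    (Θ : Set (I → ℤ)) (s z : (I → ℤ) → LP I)
    -- (i) + (ii): finite local transition from S to Z
    (hSZ : ∀ g ∈ Θ, ∃ b : (I → ℤ) →₀ ℤ, (b.support : Set (I → ℤ)) ⊆ Θ ∧
      s g = (b.sum fun g' a => a • z g') ∧
      ∀ g', b g' ≠ 0 → suppz Iuf Bt g' (z g') ⊆ suppz Iuf Bt g (s g))
    -- (i) + (ii): finite local transition from Z to S
    (hZS : ∀ g ∈ Θ, ∃ c : (I → ℤ) →₀ ℤ, (c.support : Set (I → ℤ)) ⊆ Θ ∧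
      z g = (c.sum fun g' a => a • s g') ∧
      ∀ g', c g' ≠ 0 → suppz Iuf Bt g' (s g') ⊆ suppz Iuf Bt g (z g))
    -- (iii): Z has local support under multiplication
    (hZmul : ∀ g₁ ∈ Θ, ∀ g₂ ∈ Θ, ∃ α : (I → ℤ) →₀ ℤ, (α.support : Set (I → ℤ)) ⊆ Θ ∧
      z g₁ * z g₂ = (α.sum fun g a => a • z g) ∧
      ∀ g, α g ≠ 0 → suppz Iuf Bt g (z g) ⊆ suppz Iuf Bt g₁ (z g₁) ∪ suppz Iuf Bt g₂ (z g₂)) :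
    -- S has local support under multiplication
    ∀ g₁ ∈ Θ, ∀ g₂ ∈ Θ, ∃ β : (I → ℤ) →₀ ℤ, (β.support : Set (I → ℤ)) ⊆ Θ ∧
      s g₁ * s g₂ = (β.sum fun g a => a • s g) ∧
      ∀ g, β g ≠ 0 →
        suppz Iuf Bt g (s g) ⊆ suppz Iuf Bt g₁ (s g₁) ∪ suppz Iuf Bt g₂ (s g₂) := by
  set σs : (I → ℤ) → Set I := fun g => suppz Iuf Bt g (s g)
  set σz : (I → ℤ) → Set I := fun g => suppz Iuf Bt g (z g)
  have hs_mem : ∀ g ∈ Θ, s g ∈ localSpan ℤ Θ z σz (σs g) :=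
    fun g hg => mem_localSpan_iff.2 (hSZ g hg)
  have hz_mem : ∀ g ∈ Θ, z g ∈ localSpan ℤ Θ s σs (σz g) :=
    fun g hg => mem_localSpan_iff.2 (hZS g hg)
  have hz_mul : ∀ g₁ ∈ Θ, ∀ g₂ ∈ Θ, z g₁ * z g₂ ∈ localSpan ℤ Θ z σz (σz g₁ ∪ σz g₂) :=
    fun g₁ hg₁ g₂ hg₂ => mem_localSpan_iff.2 (hZmul g₁ hg₁ g₂ hg₂)
  have h_eq : ∀ U, localSpan ℤ Θ s σs U = localSpan ℤ Θ z σz U :=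
    fun U => le_antisymm (localSpan_le_localSpan hs_mem) (localSpan_le_localSpan hz_mem)
  intro g₁ hg₁ g₂ hg₂
  rw [← mem_localSpan_iff, h_eq]
  exact localSpan_mul_le hz_mul (Submodule.mul_mem_mul (hs_mem g₁ hg₁) (hs_mem g₂ hg₂))

end CAFreeze
end
end
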